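/- Let U(x) = 24√2 (1+|x|²)^{−2} and W(x) = 24 (1+|x|²)^{−2} on ℝ⁶. Then: (i) W(x) = (1/(8π³)) ∫_{ℝ⁶} U(y)² |x−y|^{−4} dy for every x ∈ ℝ⁶; and (ii) the pair (U, W) solves the elliptic system −ΔU = U·W and −ΔW = (1/2) U² pointwise on ℝ⁶. -/

import Mathlib

open MeasureTheory Real Set


noncomputable section
abbrev E6 := EuclideanSpace ℝ (Fin 6)

/-- The Laplacian of a function on `ℝ⁶`, as the sum of the second partial derivatives. -/
def lap6 (u : EuclideanSpace ℝ (Fin 6) → ℝ) (x : EuclideanSpace ℝ (Fin 6)) : ℝ :=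
  ∑ i : Fin 6,
    fderiv ℝ (fun y => fderiv ℝ u y (EuclideanSpace.single i 1)) x (EuclideanSpace.single i 1)

lemma hasFDerivAt_bubble (c : ℝ) (y : E6) :
    HasFDerivAt (fun y : E6 => c / (1 + ‖y‖ ^ 2) ^ 2)
      ((-4 * c / (1 + ‖y‖ ^ 2) ^ 3) • (innerSL ℝ y)) y := by
  have h0 : (0:ℝ) < 1 + ‖y‖ ^ 2 := by positivity
  have hq : HasFDerivAt (fun y : E6 => ‖y‖ ^ 2) (2 • (innerSL ℝ y)) y := by
    simpa using (hasFDerivAt_id y).norm_sq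
  have hφ : HasDerivAt (fun t : ℝ => c / (1 + t) ^ 2) (-2 * c / (1 + ‖y‖ ^ 2) ^ 3) (‖y‖ ^ 2) := by
    have h1 : HasDerivAt (fun t : ℝ => (1 + t) ^ 2) (2 * (1 + ‖y‖ ^ 2)) (‖y‖ ^ 2) := by
      simpa using (((hasDerivAt_id (‖y‖ ^ 2)).const_add 1).fun_pow 2)
    have h2 := (h1.inv (by positivity)).const_mul c
    have heq : (fun t : ℝ => c / (1 + t) ^ 2) = fun t : ℝ => c * ((1 + t) ^ 2)⁻¹ := by
      funext t; rw [div_eq_mul_inv]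
    rw [heq]
    refine h2.congr_deriv ?_
    field_simp
  have := hφ.comp_hasFDerivAt y hq
  refine this.congr_fderiv ?_
  ext v
  simp [smul_smul]
  ring

lemma fderiv_bubble_apply (c : ℝ) (i : Fin 6) :
    (fun y : E6 => fderiv ℝ (fun z : E6 => c / (1 + ‖z‖ ^ 2) ^ 2) y (EuclideanSpace.single i 1))
      = fun y : E6 => (-4 * c / (1 + ‖y‖ ^ 2) ^ 3) * y i := by
  funext y
  rw [(hasFDerivAt_bubble c y).fderiv]
  simp [EuclideanSpace.inner_single_right]

lemma hasFDerivAt_bubble3 (c : ℝ) (y : E6) :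
    HasFDerivAt (fun y : E6 => -4 * c / (1 + ‖y‖ ^ 2) ^ 3)
      ((24 * c / (1 + ‖y‖ ^ 2) ^ 4) • (innerSL ℝ y)) y := by
  have h0 : (0:ℝ) < 1 + ‖y‖ ^ 2 := by positivity
  have hq : HasFDerivAt (fun y : E6 => ‖y‖ ^ 2) (2 • (innerSL ℝ y)) y := by
    simpa using (hasFDerivAt_id y).norm_sq
  have hφ : HasDerivAt (fun t : ℝ => -4 * c / (1 + t) ^ 3)
      (12 * c / (1 + ‖y‖ ^ 2) ^ 4) (‖y‖ ^ 2) := by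
    have h1 : HasDerivAt (fun t : ℝ => (1 + t) ^ 3) (3 * (1 + ‖y‖ ^ 2) ^ 2) (‖y‖ ^ 2) := by
      simpa using (((hasDerivAt_id (‖y‖ ^ 2)).const_add 1).fun_pow 3)
    have h2 := (h1.inv (by positivity)).const_mul (-4 * c)
    have heq : (fun t : ℝ => -4 * c / (1 + t) ^ 3) = fun t : ℝ => -4 * c * ((1 + t) ^ 3)⁻¹ := by
      funext t; rw [div_eq_mul_inv]
    rw [heq]
    refine h2.congr_deriv ?_
    field_simp; ring
  have := hφ.comp_hasFDerivAt y hq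
  refine this.congr_fderiv ?_
  ext v
  simp [smul_smul]
  ring

lemma lap6_bubble (c : ℝ) (x : E6) :
    lap6 (fun y : E6 => c / (1 + ‖y‖ ^ 2) ^ 2) x = -24 * c / (1 + ‖x‖ ^ 2) ^ 4 := by
  have h0 : (0:ℝ) < 1 + ‖x‖ ^ 2 := by positivity
  have hsum : ∑ i : Fin 6, (x i) ^ 2 = ‖x‖ ^ 2 := by
    rw [EuclideanSpace.norm_eq, sq_sqrt (by positivity)]
    exact Finset.sum_congr rfl fun i _ => (sq_abs (x i)).symm
  unfold lap6
  have hterm : ∀ i : Fin 6,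
      fderiv ℝ (fun y : E6 =>
          fderiv ℝ (fun z : E6 => c / (1 + ‖z‖ ^ 2) ^ 2) y (EuclideanSpace.single i 1)) x
        (EuclideanSpace.single i 1)
      = 24 * c / (1 + ‖x‖ ^ 2) ^ 4 * (x i) ^ 2 + (-4 * c / (1 + ‖x‖ ^ 2) ^ 3) := by
    intro i
    rw [fderiv_bubble_apply c i]
    have hA := hasFDerivAt_bubble3 c x
    have hB : HasFDerivAt (fun y : E6 => y i) (EuclideanSpace.proj (𝕜 := ℝ) i) x :=
      (EuclideanSpace.proj (𝕜 := ℝ) i).hasFDerivAt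
    have := hA.fun_mul hB
    rw [this.fderiv]
    simp [EuclideanSpace.inner_single_right, EuclideanSpace.proj]
    ring
  rw [Finset.sum_congr rfl fun i _ => hterm i]
  rw [Finset.sum_add_distrib, ← Finset.mul_sum, hsum]
  simp only [Finset.sum_const, Finset.card_univ, Fintype.card_fin, nsmul_eq_mul]
  field_simp
  ring

lemma tendsto_pow_exp (k : ℝ) (hk : 0 < k) (n : ℕ) :
    Filter.Tendsto (fun t : ℝ => t ^ n * exp (-(k * t))) Filter.atTop (nhds 0) := by
  have h1 : Filter.Tendsto (fun t : ℝ => k * t) Filter.atTop Filter.atTop :=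
    Filter.Tendsto.const_mul_atTop hk Filter.tendsto_id
  have h2 := (tendsto_pow_mul_exp_neg_atTop_nhds_zero n).comp h1
  have h3 := h2.const_mul ((k ^ n)⁻¹)
  rw [mul_zero] at h3
  refine h3.congr fun t => ?_
  simp only [Function.comp]
  rw [mul_pow]
  field_simp

lemma hasDerivAt_expk (k t : ℝ) :
    HasDerivAt (fun t : ℝ => exp (-(k * t))) (-k * exp (-(k * t))) t := by
  have h : HasDerivAt (fun t : ℝ => -(k * t)) (-k) t := by
    simpa using ((hasDerivAt_id t).const_mul k).fun_neg
  simpa [mul_comm] using h.exp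

lemma int_t1_exp {k : ℝ} (hk : 0 < k) :
    IntegrableOn (fun t : ℝ => t * exp (-(k * t))) (Ioi 0) ∧
      ∫ t in Ioi 0, t * exp (-(k * t)) = 1 / k ^ 2 := by
  set G : ℝ → ℝ := fun t => -((t / k + 1 / k ^ 2) * exp (-(k * t))) with hG
  have hderiv : ∀ t ∈ Ici (0:ℝ), HasDerivAt G (t * exp (-(k * t))) t := by
    intro t _
    have hp : HasDerivAt (fun t : ℝ => t / k + 1 / k ^ 2) (1 / k) t :=
      ((hasDerivAt_id t).div_const k).add_const (1 / k ^ 2)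
    have := (hp.mul (hasDerivAt_expk k t)).neg
    refine this.congr_deriv ?_
    field_simp
    ring
  have hnn : ∀ t ∈ Ioi (0:ℝ), 0 ≤ t * exp (-(k * t)) := fun t ht =>
    mul_nonneg (le_of_lt ht) (exp_pos _).le
  have htend : Filter.Tendsto G Filter.atTop (nhds 0) := by
    have h1 := (tendsto_pow_exp k hk 1).const_mul (1/k)
    have h2 := (tendsto_pow_exp k hk 0).const_mul (1/k^2)
    rw [mul_zero] at h1 h2
    have := (h1.add h2).neg
    rw [add_zero, neg_zero] at this
    refine this.congr fun t => ?_
    simp [hG]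
    ring
  refine ⟨integrableOn_Ioi_deriv_of_nonneg' hderiv hnn htend, ?_⟩
  rw [integral_Ioi_of_hasDerivAt_of_nonneg' hderiv hnn htend]
  simp [hG]
  try field_simp
  try ring

lemma int_t2_exp {k : ℝ} (hk : 0 < k) :
    IntegrableOn (fun t : ℝ => t ^ 2 * exp (-(k * t))) (Ioi 0) ∧
      ∫ t in Ioi 0, t ^ 2 * exp (-(k * t)) = 2 / k ^ 3 := by
  set G : ℝ → ℝ := fun t => -((t ^ 2 / k + 2 * t / k ^ 2 + 2 / k ^ 3) * exp (-(k * t))) with hG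
  have hderiv : ∀ t ∈ Ici (0:ℝ), HasDerivAt G (t ^ 2 * exp (-(k * t))) t := by
    intro t _
    have hp : HasDerivAt (fun t : ℝ => t ^ 2 / k + 2 * t / k ^ 2 + 2 / k ^ 3)
        (2 * t / k + 2 / k ^ 2) t := by
      have : HasDerivAt (fun t : ℝ => t ^ 2 / k + 2 * t / k ^ 2 + 2 / k ^ 3) _ t :=
        (((hasDerivAt_pow 2 t).div_const k).add
        (((hasDerivAt_id t).const_mul 2).div_const (k ^ 2))).add_const (2 / k ^ 3)
      convert this using 1
      push_cast
      try ring
    have := (hp.mul (hasDerivAt_expk k t)).neg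
    refine this.congr_deriv ?_
    field_simp
    ring
  have hnn : ∀ t ∈ Ioi (0:ℝ), 0 ≤ t ^ 2 * exp (-(k * t)) := fun t ht => by positivity
  have htend : Filter.Tendsto G Filter.atTop (nhds 0) := by
    have h1 := (tendsto_pow_exp k hk 2).const_mul (1/k)
    have h2 := (tendsto_pow_exp k hk 1).const_mul (2/k^2)
    have h3 := (tendsto_pow_exp k hk 0).const_mul (2/k^3)
    rw [mul_zero] at h1 h2 h3
    have := ((h1.add h2).add h3).neg
    rw [add_zero, add_zero, neg_zero] at this
    refine this.congr fun t => ?_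
    simp [hG]
    ring
  refine ⟨integrableOn_Ioi_deriv_of_nonneg' hderiv hnn htend, ?_⟩
  rw [integral_Ioi_of_hasDerivAt_of_nonneg' hderiv hnn htend]
  simp [hG]
  try field_simp
  try ring

lemma int_t3_exp {k : ℝ} (hk : 0 < k) :
    IntegrableOn (fun t : ℝ => t ^ 3 * exp (-(k * t))) (Ioi 0) ∧
      ∫ t in Ioi 0, t ^ 3 * exp (-(k * t)) = 6 / k ^ 4 := by
  set G : ℝ → ℝ := fun t =>
    -((t ^ 3 / k + 3 * t ^ 2 / k ^ 2 + 6 * t / k ^ 3 + 6 / k ^ 4) * exp (-(k * t))) with hG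
  have hderiv : ∀ t ∈ Ici (0:ℝ), HasDerivAt G (t ^ 3 * exp (-(k * t))) t := by
    intro t _
    have hp : HasDerivAt (fun t : ℝ => t ^ 3 / k + 3 * t ^ 2 / k ^ 2 + 6 * t / k ^ 3 + 6 / k ^ 4)
        (3 * t ^ 2 / k + 6 * t / k ^ 2 + 6 / k ^ 3) t := by
      have : HasDerivAt (fun t : ℝ => t ^ 3 / k + 3 * t ^ 2 / k ^ 2 + 6 * t / k ^ 3 + 6 / k ^ 4) _ t :=
        ((((hasDerivAt_pow 3 t).div_const k).add
        (((hasDerivAt_pow 2 t).const_mul 3).div_const (k ^ 2))).add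
        (((hasDerivAt_id t).const_mul 6).div_const (k ^ 3))).add_const (6 / k ^ 4)
      convert this using 1
      push_cast
      try ring
    have := (hp.mul (hasDerivAt_expk k t)).neg
    refine this.congr_deriv ?_
    field_simp
    ring
  have hnn : ∀ t ∈ Ioi (0:ℝ), 0 ≤ t ^ 3 * exp (-(k * t)) := fun t ht => by
    have : (0:ℝ) ≤ t := le_of_lt ht
    positivity
  have htend : Filter.Tendsto G Filter.atTop (nhds 0) := by
    have h1 := (tendsto_pow_exp k hk 3).const_mul (1/k)
    have h2 := (tendsto_pow_exp k hk 2).const_mul (3/k^2)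
    have h3 := (tendsto_pow_exp k hk 1).const_mul (6/k^3)
    have h4 := (tendsto_pow_exp k hk 0).const_mul (6/k^4)
    rw [mul_zero] at h1 h2 h3 h4
    have := (((h1.add h2).add h3).add h4).neg
    rw [add_zero, add_zero, add_zero, neg_zero] at this
    refine this.congr fun t => ?_
    simp [hG]
    ring
  refine ⟨integrableOn_Ioi_deriv_of_nonneg' hderiv hnn htend, ?_⟩
  rw [integral_Ioi_of_hasDerivAt_of_nonneg' hderiv hnn htend]
  simp [hG]
  try field_simp
  try ring

lemma int_tau {c : ℝ} (hc : 0 < c) :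
    IntegrableOn (fun τ : ℝ => τ / (1 + c * τ) ^ 3) (Ioi 0) ∧
      ∫ τ in Ioi 0, τ / (1 + c * τ) ^ 3 = 1 / (2 * c ^ 2) := by
  set G : ℝ → ℝ := fun τ => -(c ^ 2 * (1 + c * τ))⁻¹ + (2 * c ^ 2 * (1 + c * τ) ^ 2)⁻¹
    with hG
  have hpos : ∀ τ : ℝ, τ ∈ Ici (0:ℝ) → 0 < 1 + c * τ := fun τ hτ => by
    have : (0:ℝ) ≤ τ := hτ
    positivity
  have hderiv : ∀ τ ∈ Ici (0:ℝ), HasDerivAt G (τ / (1 + c * τ) ^ 3) τ := by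
    intro τ hτ
    have h0 := hpos τ hτ
    have hl : HasDerivAt (fun τ : ℝ => 1 + c * τ) c τ := by
      simpa using ((hasDerivAt_id τ).const_mul c).const_add 1
    have ha : HasDerivAt (fun τ : ℝ => c ^ 2 * (1 + c * τ)) (c ^ 2 * c) τ := hl.const_mul _
    have hb : HasDerivAt (fun τ : ℝ => 2 * c ^ 2 * (1 + c * τ) ^ 2)
        (2 * c ^ 2 * (2 * (1 + c * τ) * c)) τ := by
      have := (hl.pow 2).const_mul (2 * c ^ 2)
      refine this.congr_deriv ?_
      ring
    have h1 := (ha.inv (by positivity)).neg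
    have h2 := hb.inv (by positivity)
    have := h1.add h2
    refine this.congr_deriv ?_
    field_simp
    ring
  have hnn : ∀ τ ∈ Ioi (0:ℝ), 0 ≤ τ / (1 + c * τ) ^ 3 := fun τ hτ => by
    have h0 := hpos τ (Set.mem_Ici.mpr (le_of_lt hτ))
    have : (0:ℝ) ≤ τ := le_of_lt hτ
    positivity
  have htend : Filter.Tendsto G Filter.atTop (nhds 0) := by
    have hl : Filter.Tendsto (fun τ : ℝ => 1 + c * τ) Filter.atTop Filter.atTop :=
      Filter.tendsto_atTop_add_const_left _ 1 (Filter.Tendsto.const_mul_atTop hc Filter.tendsto_id)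
    have h1 : Filter.Tendsto (fun τ : ℝ => (c ^ 2 * (1 + c * τ))⁻¹) Filter.atTop (nhds 0) := by
      have := (hl.const_mul_atTop (show (0:ℝ) < c ^ 2 by positivity)).inv_tendsto_atTop
      exact this.congr fun τ => rfl
    have h2 : Filter.Tendsto (fun τ : ℝ => (2 * c ^ 2 * (1 + c * τ) ^ 2)⁻¹)
        Filter.atTop (nhds 0) := by
      have hsq : Filter.Tendsto (fun τ : ℝ => 2 * c ^ 2 * (1 + c * τ) ^ 2)
          Filter.atTop Filter.atTop := by
        have := (hl.atTop_mul_atTop₀ hl).const_mul_atTop (show (0:ℝ) < 2 * c ^ 2 by positivity)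
        exact this.congr fun τ => by ring
      exact hsq.inv_tendsto_atTop.congr fun τ => rfl
    have := (h1.neg).add h2
    rw [neg_zero, add_zero] at this
    exact this
  refine ⟨integrableOn_Ioi_deriv_of_nonneg' hderiv hnn htend, ?_⟩
  rw [integral_Ioi_of_hasDerivAt_of_nonneg' hderiv hnn htend]
  simp [hG]
  try field_simp
  try ring

lemma lint_Ioi {f : ℝ → ℝ} (hi : IntegrableOn f (Ioi 0)) (hnn : ∀ t ∈ Ioi (0:ℝ), 0 ≤ f t) :
    ∫⁻ t in Ioi 0, ENNReal.ofReal (f t) = ENNReal.ofReal (∫ t in Ioi 0, f t) :=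
  (ofReal_integral_eq_lintegral_ofReal hi
    ((ae_restrict_iff' measurableSet_Ioi).2 (Filter.Eventually.of_forall hnn))).symm

abbrev E6' := EuclideanSpace ℝ (Fin 6)

lemma integrable_gauss {c : ℝ} (hc : 0 < c) :
    Integrable (fun y : E6' => exp (-(c * ‖y‖ ^ 2))) := by
  have h := (GaussianFourier.integrable_cexp_neg_mul_sq_norm_add
    (V := E6') (b := (c : ℂ)) (by simpa using hc) 0 0).norm
  refine h.congr (Filter.Eventually.of_forall fun y => ?_)
  simp [Complex.norm_exp, neg_mul]
  left
  rw [← Complex.ofReal_pow, Complex.ofReal_re]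

lemma integral_gauss {c : ℝ} (hc : 0 < c) :
    ∫ y : E6', exp (-(c * ‖y‖ ^ 2)) = (π / c) ^ 3 := by
  have h := GaussianFourier.integral_rexp_neg_mul_sq_norm (V := E6') hc
  have hr : (Module.finrank ℝ E6' : ℝ) / 2 = ((3 : ℕ) : ℝ) := by
    simp [finrank_euclideanSpace]
    norm_num
  rw [hr, Real.rpow_natCast] at h
  rw [← h]
  simp only [neg_mul]

lemma lint_gauss {c : ℝ} (hc : 0 < c) :
    ∫⁻ y : E6', ENNReal.ofReal (exp (-(c * ‖y‖ ^ 2))) = ENNReal.ofReal ((π / c) ^ 3) := by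
  rw [← integral_gauss hc]
  exact (ofReal_integral_eq_lintegral_ofReal (integrable_gauss hc)
    (Filter.Eventually.of_forall fun y => (exp_pos _).le)).symm


def Pk (x : E6') (s τ : ℝ) (y : E6') : ℝ :=
  1/6 * (s ^ 3 * exp (-(s * (1 + ‖y‖ ^ 2)))) * (s ^ 2 * (τ * exp (-(s * τ * ‖x - y‖ ^ 2))))

lemma Pk_cont (x : E6') : Continuous fun p : ℝ × ℝ × E6' => Pk x p.1 p.2.1 p.2.2 := by
  unfold Pk; fun_prop

lemma step1 (x y : E6') (hxy : y ≠ x) :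
    (∫⁻ s in Ioi 0, ∫⁻ τ in Ioi 0, ENNReal.ofReal (Pk x s τ y)) =
      ENNReal.ofReal (1 / ((1 + ‖y‖ ^ 2) ^ 4 * ‖x - y‖ ^ 4)) := by
  have hd : (0:ℝ) < ‖x - y‖ := by
    rw [norm_pos_iff, sub_ne_zero]; exact fun h => hxy h.symm
  have hK : (0:ℝ) < 1 + ‖y‖ ^ 2 := by positivity
  have h1 : ∀ s ∈ Ioi (0:ℝ), (∫⁻ τ in Ioi 0, ENNReal.ofReal (Pk x s τ y)) =
      ENNReal.ofReal ((1/(6 * ‖x - y‖ ^ 4)) * (s ^ 3 * exp (-((1 + ‖y‖ ^ 2) * s)))) := by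
    intro s hs
    have hs0 : (0:ℝ) < s := hs
    set C : ℝ := 1/6 * (s ^ 3 * exp (-(s * (1 + ‖y‖ ^ 2)))) * s ^ 2 with hC
    have hCnn : 0 ≤ C := by positivity
    have hk : (0:ℝ) < s * ‖x - y‖ ^ 2 := by positivity
    calc ∫⁻ τ in Ioi 0, ENNReal.ofReal (Pk x s τ y)
        = ∫⁻ τ in Ioi 0, ENNReal.ofReal C *
            ENNReal.ofReal (τ * exp (-((s * ‖x - y‖ ^ 2) * τ))) := by
          refine setLIntegral_congr_fun measurableSet_Ioi
            (fun τ hτ => ?_)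
          rw [← ENNReal.ofReal_mul hCnn]
          unfold Pk
          rw [show s * ‖x - y‖ ^ 2 * τ = s * τ * ‖x - y‖ ^ 2 from by ring]
          congr 1
          rw [hC]; ring
      _ = ENNReal.ofReal C * ∫⁻ τ in Ioi 0, ENNReal.ofReal (τ * exp (-((s * ‖x - y‖ ^ 2) * τ))) :=
          lintegral_const_mul' _ _ ENNReal.ofReal_ne_top
      _ = ENNReal.ofReal C * ENNReal.ofReal (1 / (s * ‖x - y‖ ^ 2) ^ 2) := by
          rw [lint_Ioi (int_t1_exp hk).1
            (fun τ hτ => mul_nonneg (le_of_lt hτ) (exp_pos _).le), (int_t1_exp hk).2]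
      _ = ENNReal.ofReal ((1/(6 * ‖x - y‖ ^ 4)) * (s ^ 3 * exp (-((1 + ‖y‖ ^ 2) * s)))) := by
          rw [← ENNReal.ofReal_mul hCnn]
          rw [show (1 + ‖y‖ ^ 2) * s = s * (1 + ‖y‖ ^ 2) from by ring]
          congr 1
          rw [hC]
          field_simp
  rw [setLIntegral_congr_fun measurableSet_Ioi h1]
  have hcnn : (0:ℝ) ≤ 1/(6 * ‖x - y‖ ^ 4) := by positivity
  calc ∫⁻ s in Ioi 0, ENNReal.ofReal ((1/(6 * ‖x - y‖ ^ 4)) * (s ^ 3 * exp (-((1 + ‖y‖ ^ 2) * s))))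
      = ∫⁻ s in Ioi 0, ENNReal.ofReal (1/(6 * ‖x - y‖ ^ 4)) *
          ENNReal.ofReal (s ^ 3 * exp (-((1 + ‖y‖ ^ 2) * s))) := by
        refine setLIntegral_congr_fun measurableSet_Ioi
          (fun s hs => ?_)
        rw [← ENNReal.ofReal_mul hcnn]
    _ = ENNReal.ofReal (1/(6 * ‖x - y‖ ^ 4)) *
          ∫⁻ s in Ioi 0, ENNReal.ofReal (s ^ 3 * exp (-((1 + ‖y‖ ^ 2) * s))) :=
        lintegral_const_mul' _ _ ENNReal.ofReal_ne_top
    _ = ENNReal.ofReal (1/(6 * ‖x - y‖ ^ 4)) * ENNReal.ofReal (6 / (1 + ‖y‖ ^ 2) ^ 4) := by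
        rw [lint_Ioi (int_t3_exp hK).1 (fun s hs => by
            have : (0:ℝ) ≤ s := le_of_lt hs
            positivity), (int_t3_exp hK).2]
    _ = ENNReal.ofReal (1 / ((1 + ‖y‖ ^ 2) ^ 4 * ‖x - y‖ ^ 4)) := by
        rw [← ENNReal.ofReal_mul hcnn]
        congr 1
        field_simp


lemma exp_split (x y : E6') (s τ : ℝ) (hτ1 : (0:ℝ) < 1 + τ) :
    s * (1 + ‖y‖ ^ 2) + s * τ * ‖x - y‖ ^ 2 =
      (s * (1 + τ)) * ‖y - (τ / (1 + τ)) • x‖ ^ 2 + ((1 + τ + τ * ‖x‖ ^ 2) / (1 + τ)) * s := by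
  have hτ1' : (1:ℝ) + τ ≠ 0 := ne_of_gt hτ1
  have h1 : ‖y - (τ / (1 + τ)) • x‖ ^ 2 =
      ‖y‖ ^ 2 - 2 * ((τ / (1 + τ)) * inner ℝ y x) + (τ / (1 + τ)) ^ 2 * ‖x‖ ^ 2 := by
    rw [@norm_sub_sq_real _ _ _ y ((τ / (1 + τ)) • x), real_inner_smul_right, norm_smul]
    rw [mul_pow, Real.norm_eq_abs, sq_abs]
  have h2 : ‖x - y‖ ^ 2 = ‖x‖ ^ 2 - 2 * inner ℝ x y + ‖y‖ ^ 2 := @norm_sub_sq_real _ _ _ x y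
  have h3 : (inner ℝ x y : ℝ) = inner ℝ y x := real_inner_comm y x
  rw [h1, h2, h3]
  field_simp
  ring

lemma step3 (x : E6') {s τ : ℝ} (hs : 0 < s) (hτ : 0 < τ) :
    ∫⁻ y : E6', ENNReal.ofReal (Pk x s τ y) =
      ENNReal.ofReal ((π ^ 3 / 6) * s ^ 2 * (τ / (1 + τ) ^ 3) *
        exp (-(((1 + τ + τ * ‖x‖ ^ 2) / (1 + τ)) * s))) := by
  have hτ1 : (0:ℝ) < 1 + τ := by positivity
  set w : E6' := (τ / (1 + τ)) • x with hw
  set k : ℝ := s * (1 + τ) with hk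
  have hk0 : 0 < k := by positivity
  set C : ℝ := 1/6 * s ^ 5 * τ * exp (-(((1 + τ + τ * ‖x‖ ^ 2) / (1 + τ)) * s)) with hC
  have hCnn : 0 ≤ C := by positivity
  have hPt : ∀ y : E6', Pk x s τ y = C * exp (-(k * ‖y - w‖ ^ 2)) := by
    intro y
    have hee : exp (-(s * (1 + ‖y‖ ^ 2))) * exp (-(s * τ * ‖x - y‖ ^ 2)) =
        exp (-(((1 + τ + τ * ‖x‖ ^ 2) / (1 + τ)) * s)) * exp (-(k * ‖y - w‖ ^ 2)) := by
      rw [← exp_add, ← exp_add]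
      congr 1
      have h := exp_split x y s τ hτ1
      rw [← hw, ← hk] at h
      linarith
    unfold Pk
    rw [hC]
    calc 1/6 * (s ^ 3 * exp (-(s * (1 + ‖y‖ ^ 2)))) * (s ^ 2 * (τ * exp (-(s * τ * ‖x - y‖ ^ 2))))
        = 1/6 * s ^ 5 * τ * (exp (-(s * (1 + ‖y‖ ^ 2))) * exp (-(s * τ * ‖x - y‖ ^ 2))) := by ring
      _ = 1/6 * s ^ 5 * τ * exp (-((1 + τ + τ * ‖x‖ ^ 2) / (1 + τ) * s)) *
          exp (-(k * ‖y - w‖ ^ 2)) := by rw [hee]; ring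
  calc ∫⁻ y : E6', ENNReal.ofReal (Pk x s τ y)
      = ∫⁻ y : E6', ENNReal.ofReal C * ENNReal.ofReal (exp (-(k * ‖y - w‖ ^ 2))) := by
        refine lintegral_congr fun y => ?_
        rw [hPt y, ENNReal.ofReal_mul hCnn]
    _ = ENNReal.ofReal C * ∫⁻ y : E6', ENNReal.ofReal (exp (-(k * ‖y - w‖ ^ 2))) :=
        lintegral_const_mul' _ _ ENNReal.ofReal_ne_top
    _ = ENNReal.ofReal C * ∫⁻ y : E6', ENNReal.ofReal (exp (-(k * ‖y‖ ^ 2))) := by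
        rw [lintegral_sub_right_eq_self (fun z : E6' => ENNReal.ofReal (exp (-(k * ‖z‖ ^ 2)))) w]
    _ = ENNReal.ofReal C * ENNReal.ofReal ((π / k) ^ 3) := by rw [lint_gauss hk0]
    _ = ENNReal.ofReal ((π ^ 3 / 6) * s ^ 2 * (τ / (1 + τ) ^ 3) *
        exp (-(((1 + τ + τ * ‖x‖ ^ 2) / (1 + τ)) * s))) := by
        rw [← ENNReal.ofReal_mul hCnn]
        congr 1
        rw [hC, hk]
        field_simp

lemma step4 (x : E6') {τ : ℝ} (hτ : 0 < τ) :
    ∫⁻ s in Ioi 0, ENNReal.ofReal ((π ^ 3 / 6) * s ^ 2 * (τ / (1 + τ) ^ 3) *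
        exp (-(((1 + τ + τ * ‖x‖ ^ 2) / (1 + τ)) * s))) =
      ENNReal.ofReal ((π ^ 3 / 3) * (τ / (1 + (1 + ‖x‖ ^ 2) * τ) ^ 3)) := by
  have hτ1 : (0:ℝ) < 1 + τ := by positivity
  set k : ℝ := (1 + τ + τ * ‖x‖ ^ 2) / (1 + τ) with hk
  have hk0 : 0 < k := by positivity
  set D : ℝ := (π ^ 3 / 6) * (τ / (1 + τ) ^ 3) with hD
  have hDnn : 0 ≤ D := by positivity
  calc ∫⁻ s in Ioi 0, ENNReal.ofReal ((π ^ 3 / 6) * s ^ 2 * (τ / (1 + τ) ^ 3) * exp (-(k * s)))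
      = ∫⁻ s in Ioi 0, ENNReal.ofReal D * ENNReal.ofReal (s ^ 2 * exp (-(k * s))) := by
        refine setLIntegral_congr_fun measurableSet_Ioi
          (fun s hs => ?_)
        rw [← ENNReal.ofReal_mul hDnn]
        congr 1
        rw [hD]; ring
    _ = ENNReal.ofReal D * ∫⁻ s in Ioi 0, ENNReal.ofReal (s ^ 2 * exp (-(k * s))) :=
        lintegral_const_mul' _ _ ENNReal.ofReal_ne_top
    _ = ENNReal.ofReal D * ENNReal.ofReal (2 / k ^ 3) := by
        rw [lint_Ioi (int_t2_exp hk0).1 (fun s hs => by positivity), (int_t2_exp hk0).2]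
    _ = ENNReal.ofReal ((π ^ 3 / 3) * (τ / (1 + (1 + ‖x‖ ^ 2) * τ) ^ 3)) := by
        rw [← ENNReal.ofReal_mul hDnn]
        congr 1
        rw [hD, hk]
        have h2 : (0:ℝ) < 1 + τ + τ * ‖x‖ ^ 2 := by positivity
        rw [div_pow, div_div_eq_mul_div, show (1 + (1 + ‖x‖ ^ 2) * τ) = 1 + τ + τ * ‖x‖ ^ 2
          from by ring]
        field_simp
        ring

lemma step5 (x : E6') :
    ∫⁻ τ in Ioi 0, ENNReal.ofReal ((π ^ 3 / 3) * (τ / (1 + (1 + ‖x‖ ^ 2) * τ) ^ 3)) =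
      ENNReal.ofReal (π ^ 3 / (6 * (1 + ‖x‖ ^ 2) ^ 2)) := by
  have hc : (0:ℝ) < 1 + ‖x‖ ^ 2 := by positivity
  have hE : (0:ℝ) ≤ π ^ 3 / 3 := by positivity
  calc ∫⁻ τ in Ioi 0, ENNReal.ofReal ((π ^ 3 / 3) * (τ / (1 + (1 + ‖x‖ ^ 2) * τ) ^ 3))
      = ∫⁻ τ in Ioi 0, ENNReal.ofReal (π ^ 3 / 3) *
          ENNReal.ofReal (τ / (1 + (1 + ‖x‖ ^ 2) * τ) ^ 3) := by
        refine setLIntegral_congr_fun measurableSet_Ioi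
          (fun τ hτ => ?_)
        rw [← ENNReal.ofReal_mul hE]
    _ = ENNReal.ofReal (π ^ 3 / 3) *
          ∫⁻ τ in Ioi 0, ENNReal.ofReal (τ / (1 + (1 + ‖x‖ ^ 2) * τ) ^ 3) :=
        lintegral_const_mul' _ _ ENNReal.ofReal_ne_top
    _ = ENNReal.ofReal (π ^ 3 / 3) * ENNReal.ofReal (1 / (2 * (1 + ‖x‖ ^ 2) ^ 2)) := by
        rw [lint_Ioi (int_tau hc).1 (fun τ hτ => by
          have h1 : (0:ℝ) ≤ τ := le_of_lt hτ
          have h2 : (0:ℝ) < 1 + (1 + ‖x‖ ^ 2) * τ := by positivity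
          positivity), (int_tau hc).2]
    _ = ENNReal.ofReal (π ^ 3 / (6 * (1 + ‖x‖ ^ 2) ^ 2)) := by
        rw [← ENNReal.ofReal_mul hE]
        congr 1
        field_simp
        ring

attribute [irreducible] Pk

lemma keyA (x : E6') :
    ∫⁻ y : E6', ENNReal.ofReal (1 / ((1 + ‖y‖ ^ 2) ^ 4 * ‖x - y‖ ^ 4)) =
      ENNReal.ofReal (π ^ 3 / (6 * (1 + ‖x‖ ^ 2) ^ 2)) := by
  have hmeas0 : Measurable fun q : ℝ × ℝ × E6' => ENNReal.ofReal (Pk x q.1 q.2.1 q.2.2) :=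
    (ENNReal.continuous_ofReal.comp ((Pk_cont x).comp (Continuous.prodMk continuous_fst
      (Continuous.prodMk (continuous_fst.comp continuous_snd)
        (continuous_snd.comp continuous_snd))))).measurable
  have hae : ∀ᵐ y : E6', y ≠ x := by
    refine ae_iff.mpr ?_
    simp only [ne_eq, not_not, Set.setOf_eq_eq_singleton]
    exact measure_singleton x
  have h0 : ∫⁻ y : E6', ENNReal.ofReal (1 / ((1 + ‖y‖ ^ 2) ^ 4 * ‖x - y‖ ^ 4)) =
      ∫⁻ y : E6', ∫⁻ s in Ioi 0, ∫⁻ τ in Ioi 0, ENNReal.ofReal (Pk x s τ y) :=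
    lintegral_congr_ae (hae.mono fun y hy => (step1 x y hy).symm)
  rw [h0]
  -- swap y and s
  have hswap1 : (∫⁻ y : E6', ∫⁻ s in Ioi 0, ∫⁻ τ in Ioi 0, ENNReal.ofReal (Pk x s τ y)) =
      ∫⁻ s in Ioi 0, ∫⁻ y : E6', ∫⁻ τ in Ioi 0, ENNReal.ofReal (Pk x s τ y) := by
    refine lintegral_lintegral_swap ?_
    have : Measurable fun q : (E6' × ℝ) × ℝ => ENNReal.ofReal (Pk x q.1.2 q.2 q.1.1) :=
      hmeas0.comp (measurable_fst.snd.prodMk (measurable_snd.prodMk measurable_fst.fst))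
    exact (this.lintegral_prod_right').aemeasurable
  rw [hswap1]
  -- swap y and τ (for each s)
  have hswap2 : ∀ s : ℝ, (∫⁻ y : E6', ∫⁻ τ in Ioi 0, ENNReal.ofReal (Pk x s τ y)) =
      ∫⁻ τ in Ioi 0, ∫⁻ y : E6', ENNReal.ofReal (Pk x s τ y) := by
    intro s
    refine lintegral_lintegral_swap ?_
    have : Measurable fun q : E6' × ℝ => ENNReal.ofReal (Pk x s q.2 q.1) :=
      hmeas0.comp ((measurable_const.prodMk (measurable_snd.prodMk measurable_fst)))
    exact this.aemeasurable
  rw [lintegral_congr fun s => hswap2 s]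
  -- swap s and τ
  have hswap3 : (∫⁻ s in Ioi 0, ∫⁻ τ in Ioi 0, ∫⁻ y : E6', ENNReal.ofReal (Pk x s τ y)) =
      ∫⁻ τ in Ioi 0, ∫⁻ s in Ioi 0, ∫⁻ y : E6', ENNReal.ofReal (Pk x s τ y) := by
    refine lintegral_lintegral_swap ?_
    have hm : Measurable fun q : (ℝ × ℝ) × E6' => ENNReal.ofReal (Pk x q.1.1 q.1.2 q.2) :=
      hmeas0.comp (measurable_fst.fst.prodMk (measurable_fst.snd.prodMk measurable_snd))
    exact (hm.lintegral_prod_right').aemeasurable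
  rw [hswap3]
  -- evaluate
  have hinner : ∀ τ ∈ Ioi (0:ℝ),
      (∫⁻ s in Ioi 0, ∫⁻ y : E6', ENNReal.ofReal (Pk x s τ y)) =
      ENNReal.ofReal ((π ^ 3 / 3) * (τ / (1 + (1 + ‖x‖ ^ 2) * τ) ^ 3)) := by
    intro τ hτ
    have h1 : ∀ s ∈ Ioi (0:ℝ), (∫⁻ y : E6', ENNReal.ofReal (Pk x s τ y)) =
        ENNReal.ofReal ((π ^ 3 / 6) * s ^ 2 * (τ / (1 + τ) ^ 3) *
          exp (-(((1 + τ + τ * ‖x‖ ^ 2) / (1 + τ)) * s))) := fun s hs => step3 x hs hτ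
    rw [setLIntegral_congr_fun measurableSet_Ioi h1]
    exact step4 x hτ
  rw [setLIntegral_congr_fun measurableSet_Ioi hinner]
  exact step5 x

/-- **System formulation of the critical Hartree equation.**  With
`U x = 24√2 (1+|x|²)^(-2)` and `W x = 24 (1+|x|²)^(-2)` on `ℝ⁶`:
(i) `W = (1/(8π³)) ∫ U(y)² |x-y|^(-4) dy`, and (ii) `(U, W)` solves
`-ΔU = U W`, `-ΔW = (1/2) U²` pointwise. -/
theorem bubble_system_critical_hartree :
    (∀ x : EuclideanSpace ℝ (Fin 6),
        24 / (1 + ‖x‖ ^ 2) ^ 2 =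
          (1 / (8 * π ^ 3)) *
            ∫ y : EuclideanSpace ℝ (Fin 6),
              (24 * Real.sqrt 2 / (1 + ‖y‖ ^ 2) ^ 2) ^ 2 / ‖x - y‖ ^ 4) ∧
    (∀ x : EuclideanSpace ℝ (Fin 6),
        -lap6 (fun y => 24 * Real.sqrt 2 / (1 + ‖y‖ ^ 2) ^ 2) x =
          (24 * Real.sqrt 2 / (1 + ‖x‖ ^ 2) ^ 2) * (24 / (1 + ‖x‖ ^ 2) ^ 2)) ∧
    (∀ x : EuclideanSpace ℝ (Fin 6),
        -lap6 (fun y => 24 / (1 + ‖y‖ ^ 2) ^ 2) x =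
          (1 / 2) * (24 * Real.sqrt 2 / (1 + ‖x‖ ^ 2) ^ 2) ^ 2) := by
  have hsq2 : (Real.sqrt 2) ^ 2 = 2 := Real.sq_sqrt (by norm_num)
  refine ⟨?_, ?_, ?_⟩
  · intro x
    have hc : (0:ℝ) < 1 + ‖x‖ ^ 2 := by positivity
    set g : E6' → ℝ := fun y => 1 / ((1 + ‖y‖ ^ 2) ^ 4 * ‖x - y‖ ^ 4) with hg
    have hgc : Continuous fun y : E6' => (1 + ‖y‖ ^ 2) ^ 4 * ‖x - y‖ ^ 4 := by fun_prop
    have hgmeas : Measurable g := measurable_const.div hgc.measurable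
    have hgnn : ∀ y, 0 ≤ g y := fun y => by
      rw [hg]
      positivity
    have hfin : Integrable g := by
      refine ⟨hgmeas.aestronglyMeasurable, ?_⟩
      rw [hasFiniteIntegral_iff_ofReal (Filter.Eventually.of_forall hgnn)]
      rw [keyA x]
      exact ENNReal.ofReal_lt_top
    have hval : ∫ y : E6', g y = π ^ 3 / (6 * (1 + ‖x‖ ^ 2) ^ 2) := by
      rw [integral_eq_lintegral_of_nonneg_ae (Filter.Eventually.of_forall hgnn)
        hgmeas.aestronglyMeasurable, keyA x, ENNReal.toReal_ofReal (by positivity)]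
    have hint : (fun y : E6' => (24 * Real.sqrt 2 / (1 + ‖y‖ ^ 2) ^ 2) ^ 2 / ‖x - y‖ ^ 4)
        = fun y : E6' => 1152 * g y := by
      funext y
      rw [hg, div_pow, div_div, mul_one_div]
      congr 1
      · rw [mul_pow, hsq2]; norm_num
      · rw [← pow_mul]
    rw [hint, integral_const_mul, hval]
    have hπ : (π : ℝ) ≠ 0 := Real.pi_ne_zero
    field_simp
    ring
  · intro x
    have hc : (0:ℝ) < 1 + ‖x‖ ^ 2 := by positivity
    rw [lap6_bubble (24 * Real.sqrt 2) x]
    field_simp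
  · intro x
    have hc : (0:ℝ) < 1 + ‖x‖ ^ 2 := by positivity
    rw [lap6_bubble 24 x, div_pow, mul_pow, hsq2]
    field_simp

end
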